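/- arXiv:1407.2654 — 8 statements merged into one kernel-verified Lean document; each statement's English description precedes it below -/
import Mathlib

section
/- The point Q = (32, 96) is a rational torsion point of order exactly 8 on the elliptic curve F : y² = x³ − 31x² + 256x over ℚ, and 4Q = (0, 0). -/
/-- The curve `F : y² = x³ − 31x² + 256x` over `ℚ`. -/
def Fcurve : WeierstrassCurve.Affine ℚ :=
  { a₁ := 0, a₂ := -31, a₃ := 0, a₄ := 256, a₆ := 0 }

/-!
Doubling along the tangents of slopes `7` and `1` gives `2Q = (16, 16)` and `4Q = (0, 0)`.
The point `(0, 0)` lies on the `x`-axis, so it has order `2`, and hence `Q` has order `8`.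
-/

open WeierstrassCurve.Affine

lemma addOrderOf_eq_prime_pow_succ {G : Type*} [AddMonoid G] {x : G} {p n : ℕ} [Fact p.Prime]
    (h : addOrderOf (p ^ n • x) = p) : addOrderOf x = p ^ (n + 1) := by
  refine addOrderOf_eq_prime_pow (fun h0 => ?_) ?_
  · rw [h0, addOrderOf_zero] at h
    exact (Fact.out : p.Prime).one_lt.ne h
  · have := addOrderOf_nsmul_eq_zero (p ^ n • x)
    rwa [h, ← mul_nsmul', ← pow_succ'] at this

namespace WeierstrassCurve.Affine.Point

variable {F : Type*} [Field F] [DecidableEq F] {W : WeierstrassCurve.Affine F}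

lemma some_add_self_eq_some {x y x' y' : F} {h : W.Nonsingular x y} (h' : W.Nonsingular x' y')
    (hy : y ≠ W.negY x y) (hx' : W.addX x x (W.slope x x y y) = x')
    (hy' : W.addY x x y (W.slope x x y y) = y') :
    some _ _ h + some _ _ h = some _ _ h' := by
  subst hx' hy'
  exact add_self_of_Y_ne hy

lemma addOrderOf_some_of_Y_eq {x y : F} (h : W.Nonsingular x y) (hy : y = W.negY x y) :
    addOrderOf (some _ _ h) = 2 :=
  addOrderOf_eq_prime (by rw [two_nsmul]; exact add_self_of_Y_eq hy) (some_ne_zero h)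

end WeierstrassCurve.Affine.Point

open WeierstrassCurve.Affine.Point

/-- The point `Q = (32, 96)` is a rational torsion point of order exactly `8` on the
elliptic curve `F : y² = x³ − 31x² + 256x` over `ℚ`, and `4Q = (0, 0)`. -/
theorem order_eight_point_on_F :
    ∃ (h : Fcurve.Nonsingular 32 96) (h0 : Fcurve.Nonsingular 0 0),
      addOrderOf (WeierstrassCurve.Affine.Point.some _ _ h) = 8 ∧
      (4 : ℕ) • (WeierstrassCurve.Affine.Point.some _ _ h) =
        WeierstrassCurve.Affine.Point.some _ _ h0 := by
  obtain ⟨hQ, h2Q, hT⟩ : Fcurve.Nonsingular 32 96 ∧ Fcurve.Nonsingular 16 16 ∧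
      Fcurve.Nonsingular 0 0 := by
    refine ⟨?_, ?_, ?_⟩ <;> rw [nonsingular_iff, equation_iff] <;> norm_num [Fcurve]
  have four_nsmul : (4 : ℕ) • some _ _ hQ = some _ _ hT := by
    rw [show (4 : ℕ) = 2 * 2 from rfl, mul_nsmul', two_nsmul (some _ _ hQ),
      some_add_self_eq_some h2Q, two_nsmul, some_add_self_eq_some hT] <;>
    norm_num [Fcurve, negY, addX, addY, negAddY, WeierstrassCurve.Affine.slope]
  refine ⟨hQ, hT, ?_, four_nsmul⟩
  refine addOrderOf_eq_prime_pow_succ (p := 2) (n := 2) ?_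
  rw [show (2 : ℕ) ^ 2 = 4 from rfl, four_nsmul]
  exact addOrderOf_some_of_Y_eq hT (by norm_num [Fcurve, negY])
end

section
/- The point (48459, 769824) is a rational torsion point of order exactly 7 on the elliptic curve y² = x³ − 7483623723x + 249446508217254 over ℚ. -/
/-!
Doubling `P = (48459, 769824)` three times gives `2P = (-15693, -19053144)`,
`4P = (62715, 5174928)` and `8P = P`. Hence `7P = 0`, and since `P ≠ 0` and `7` is prime,
`P` has order exactly `7`.
-/

/-- The elliptic curve `y² = x³ + (-7483623723)x + (249446508217254)` over `ℚ` (Cremona label 858k1). -/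
def E858k1 : WeierstrassCurve.Affine ℚ :=
  { a₁ := 0, a₂ := 0, a₃ := 0, a₄ := -7483623723, a₆ := 249446508217254 }

open WeierstrassCurve WeierstrassCurve.Affine

theorem addOrderOf_eq_prime_of_succ_nsmul_eq_self {G : Type*} [AddMonoid G] [IsRightCancelAdd G]
    {x : G} {p : ℕ} [Fact p.Prime] (h : (p + 1) • x = x) (hx : x ≠ 0) : addOrderOf x = p :=
  addOrderOf_eq_prime (add_eq_right.mp (succ_nsmul x p ▸ h)) hx

namespace WeierstrassCurve.Affine.Point

variable {F : Type*} [Field F] [DecidableEq F] {W : Affine F} [W.IsShortNF]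

theorem two_nsmul_some_of_isShortNF {x y x' y' : F} (h : W.Nonsingular x y)
    (h' : W.Nonsingular x' y') (hy : 2 * y ≠ 0)
    (hx' : ((3 * x ^ 2 + W.a₄) / (2 * y)) ^ 2 - 2 * x = x')
    (hy' : (3 * x ^ 2 + W.a₄) / (2 * y) * (x - x') - y = y') :
    2 • some _ _ h = some _ _ h' := by
  have hneg : y ≠ W.negY x y := by
    simp only [negY, a₁_of_isShortNF, a₃_of_isShortNF]
    contrapose! hy
    linear_combination hy
  have hslope : W.slope x x y y = (3 * x ^ 2 + W.a₄) / (2 * y) := by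
    rw [slope_of_Y_ne rfl hneg]
    simp only [negY, a₁_of_isShortNF, a₂_of_isShortNF, a₃_of_isShortNF]
    ring
  subst hx' hy'
  rw [two_nsmul, add_self_of_Y_ne hneg]
  simp only [addX, addY, negAddY, negY, hslope, a₁_of_isShortNF, a₂_of_isShortNF,
    a₃_of_isShortNF]
  congr 1 <;> ring

end WeierstrassCurve.Affine.Point

instance : E858k1.IsShortNF := ⟨rfl, rfl, rfl⟩

instance : E858k1.IsElliptic := ⟨by norm_num [Δ, b₂, b₄, b₆, b₈, E858k1]⟩

/-- The point `(48459, 769824)` is a rational torsion point of order exactly `7` on the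
elliptic curve `y² = x³ + (-7483623723)x + (249446508217254)` over `ℚ`. -/
theorem order_point_858k1 :
    ∃ h : E858k1.Nonsingular (48459) (769824),
      addOrderOf (WeierstrassCurve.Affine.Point.some _ _ h) = 7 := by
  have hP : E858k1.Nonsingular 48459 769824 :=
    equation_iff_nonsingular.mp (by norm_num [equation_iff, E858k1])
  have h2P : E858k1.Nonsingular (-15693) (-19053144) :=
    equation_iff_nonsingular.mp (by norm_num [equation_iff, E858k1])
  have h4P : E858k1.Nonsingular 62715 5174928 :=
    equation_iff_nonsingular.mp (by norm_num [equation_iff, E858k1])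
  have : Fact (Nat.Prime 7) := ⟨by norm_num⟩
  refine ⟨hP, addOrderOf_eq_prime_of_succ_nsmul_eq_self ?_ (Point.some_ne_zero hP)⟩
  calc (7 + 1) • Point.some _ _ hP = 2 • 2 • 2 • Point.some _ _ hP := by
        rw [smul_smul, smul_smul]; rfl
    _ = Point.some _ _ hP := by
      rw [Point.two_nsmul_some_of_isShortNF hP h2P, Point.two_nsmul_some_of_isShortNF h2P h4P,
        Point.two_nsmul_some_of_isShortNF h4P hP] <;> norm_num [E858k1]
end

section
/- The point (219, 1296) is a rational torsion point of order exactly 7 on the elliptic curve y² = x³ − 182763x + 31201254 over ℚ. -/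
/-- The elliptic curve `y² = x³ + (-182763)x + (31201254)` over `ℚ` (Cremona label 294b2). -/
def E294b2 : WeierstrassCurve.Affine ℚ :=
  { a₁ := 0, a₂ := 0, a₃ := 0, a₄ := -182763, a₆ := 31201254 }

/-!
With `P = (219, 1296)`, the chord-and-tangent formulas give `2P = (-213, -7776)`,
`3P = 2P + P = (435, -5832)` and `4P = 2(2P) = (435, 5832)`. Thus `4P = -3P`, so `7P = 0`,
and since `7` is prime and `P ≠ 0`, the order of `P` is exactly `7`.
-/

open WeierstrassCurve WeierstrassCurve.Affine WeierstrassCurve.Affine.Point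

lemma WeierstrassCurve.Affine.Point.some_add_some_eq {F : Type*} [Field F] [DecidableEq F]
    {W : WeierstrassCurve.Affine F} {x₁ x₂ x₃ y₁ y₂ y₃ : F} {h₁ : W.Nonsingular x₁ y₁}
    {h₂ : W.Nonsingular x₂ y₂} (h₃ : W.Nonsingular x₃ y₃) (hxy : ¬(x₁ = x₂ ∧ y₁ = W.negY x₂ y₂))
    (hx : W.addX x₁ x₂ (W.slope x₁ x₂ y₁ y₂) = x₃)
    (hy : W.addY x₁ x₂ y₁ (W.slope x₁ x₂ y₁ y₂) = y₃) :
    some _ _ h₁ + some _ _ h₂ = some _ _ h₃ := by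
  rw [add_some hxy]
  subst hx hy
  rfl

namespace E294b2

lemma Δ_ne_zero : E294b2.Δ ≠ 0 := by
  norm_num [E294b2, WeierstrassCurve.Δ, b₂, b₄, b₆, b₈]

lemma nonsingular_of_eq {x y : ℚ} (h : y ^ 2 = x ^ 3 - 182763 * x + 31201254) :
    E294b2.Nonsingular x y := by
  refine (equation_iff_nonsingular_of_Δ_ne_zero Δ_ne_zero).mp ?_
  rw [equation_iff]
  simp only [E294b2]
  linear_combination h

def P : E294b2.Point := some 219 1296 (nonsingular_of_eq (by norm_num))

lemma two_nsmul_P : 2 • P = some (-213) (-7776) (nonsingular_of_eq (by norm_num)) := by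
  rw [two_nsmul]
  apply some_add_some_eq <;> norm_num [E294b2, negY, Affine.slope, addX, addY, negAddY]

lemma three_nsmul_P : 3 • P = some 435 (-5832) (nonsingular_of_eq (by norm_num)) := by
  rw [succ_nsmul, two_nsmul_P, P]
  apply some_add_some_eq <;> norm_num [E294b2, negY, Affine.slope, addX, addY, negAddY]

lemma four_nsmul_P : 4 • P = some 435 5832 (nonsingular_of_eq (by norm_num)) := by
  rw [show 4 = 2 * 2 from rfl, mul_nsmul, two_nsmul_P, two_nsmul]
  apply some_add_some_eq <;> norm_num [E294b2, negY, Affine.slope, addX, addY, negAddY]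

lemma seven_nsmul_P : 7 • P = 0 := by
  rw [show 7 = 4 + 3 from rfl, add_nsmul, four_nsmul_P, three_nsmul_P]
  exact add_of_Y_eq rfl (by norm_num [E294b2, negY])

end E294b2

/-- The point `(219, 1296)` is a rational torsion point of order exactly `7` on the
elliptic curve `y² = x³ + (-182763)x + (31201254)` over `ℚ`. -/
theorem order_point_294b2 :
    ∃ h : E294b2.Nonsingular (219) (1296),
      addOrderOf (WeierstrassCurve.Affine.Point.some _ _ h) = 7 := by
  have : Fact (Nat.Prime 7) := ⟨by norm_num⟩
  exact ⟨_, addOrderOf_eq_prime E294b2.seven_nsmul_P (some_ne_zero _)⟩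
end

section
/- Let K be a field of characteristic not 2, 3, or 7, let s ∈ K, and suppose s²+63 ≠ 0. Set a = −8(s⁴ + 42s² − 147)/(s² + 63)² and b = 16(s² + 7)³/(s² + 63)³. Then the point P = (4(s² + 7)/(s² + 63), 224(s² + 7)/(s² + 63)²) lies on the curve y² = x(x² + ax + b), and if this cubic is separable, P is a point of order dividing 6 on the corresponding elliptic curve with 3P = (0,0). -/
/-!
Write `u = s² + 7` and `v = s² + 63`, so that `v - u = 56`. The tangent at `P` has slope
`2(s² + 35)/v` and gives `2P = (4u²/v², 224u²/v³)`; the chord through `2P` and `P` has slope `56/v`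
and meets the curve a third time at the reflection of `(0,0)`, which is `(0,0)` itself. Hence
`3P = (0,0)`, a point of order two, and `6P = 0`. Separability gives `b ≠ 0`, i.e. `u ≠ 0`, which
keeps `P` off the `x`-axis and `2P ≠ ±P`.
-/

open Polynomial WeierstrassCurve.Affine

namespace WeierstrassCurve.Affine

variable {F : Type*} [Field F] {W : Affine F} {x₁ x₂ x₃ y₁ y₂ y₃ ℓ : F}

lemma nonsingular_of_Y_ne_negY (h : W.Equation x₁ y₁) (hy : y₁ ≠ W.negY x₁ y₁) :
    W.Nonsingular x₁ y₁ := by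
  refine (nonsingular_iff' _ _).mpr ⟨h, Or.inr fun h0 => hy ?_⟩
  rw [negY]
  linear_combination h0

variable [DecidableEq F]

lemma Point.exists_add_self_eq_some (h₁ : W.Nonsingular x₁ y₁) (hy : y₁ ≠ W.negY x₁ y₁)
    (hℓ : ℓ * (y₁ - W.negY x₁ y₁) = 3 * x₁ ^ 2 + 2 * W.a₂ * x₁ + W.a₄ - W.a₁ * y₁)
    (hx₃ : W.addX x₁ x₁ ℓ = x₃) (hy₃ : W.addY x₁ x₁ y₁ ℓ = y₃) :
    ∃ h₃ : W.Nonsingular x₃ y₃, Point.some _ _ h₁ + Point.some _ _ h₁ = Point.some _ _ h₃ := by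
  have hslope : W.slope x₁ x₁ y₁ y₁ = ℓ := by
    rw [slope_of_Y_ne rfl hy, div_eq_iff (sub_ne_zero.mpr hy), hℓ]
  subst hx₃ hy₃ hslope
  exact ⟨_, Point.add_self_of_Y_ne hy⟩

lemma Point.exists_add_eq_some_of_X_ne (h₁ : W.Nonsingular x₁ y₁) (h₂ : W.Nonsingular x₂ y₂)
    (hx : x₁ ≠ x₂) (hℓ : y₁ - y₂ = ℓ * (x₁ - x₂))
    (hx₃ : W.addX x₁ x₂ ℓ = x₃) (hy₃ : W.addY x₁ x₂ y₁ ℓ = y₃) :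
    ∃ h₃ : W.Nonsingular x₃ y₃, Point.some _ _ h₁ + Point.some _ _ h₂ = Point.some _ _ h₃ := by
  have hslope : W.slope x₁ x₂ y₁ y₂ = ℓ := by
    rw [slope_of_X_ne hx, div_eq_iff (sub_ne_zero.mpr hx), hℓ]
  subst hx₃ hy₃ hslope
  exact ⟨_, Point.add_of_X_ne hx⟩

end WeierstrassCurve.Affine

lemma Polynomial.ne_zero_of_separable_X_mul {F : Type*} [Field F] {a b : F}
    (h : (X * (X ^ 2 + C a * X + C b)).Separable) : b ≠ 0 := by
  rintro rfl
  refine not_isUnit_X (h.squarefree X ⟨X + C a, ?_⟩)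
  simp only [map_zero, add_zero]
  ring

namespace OrderSixFamily

variable {F : Type*} [Field F] {a b x y t : F}

abbrev curve (a b : F) : WeierstrassCurve.Affine F :=
  { a₁ := 0, a₂ := a, a₃ := 0, a₄ := b, a₆ := 0 }

lemma negY_curve : (curve a b).negY x y = -y := by
  simp [negY]

lemma nonsingular_curve (h2 : (2 : F) ≠ 0) (h : (curve a b).Equation x y) (hy : y ≠ 0) :
    (curve a b).Nonsingular x y := by
  refine nonsingular_of_Y_ne_negY h fun h' => mul_ne_zero h2 hy ?_
  rw [negY_curve] at h'
  linear_combination h'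

lemma nonsingular_curve_zero (hb : b ≠ 0) : (curve a b).Nonsingular 0 0 :=
  nonsingular_zero.mpr ⟨rfl, Or.inr hb⟩

lemma some_zero_add_self [DecidableEq F] (h : (curve a b).Nonsingular 0 0) :
    Point.some _ _ h + Point.some _ _ h = 0 :=
  Point.add_self_of_Y_eq (by rw [negY_curve, neg_zero])

lemma equation_point (ht : t + 63 ≠ 0) (ha : a = -8 * (t ^ 2 + 42 * t - 147) / (t + 63) ^ 2)
    (hb : b = 16 * (t + 7) ^ 3 / (t + 63) ^ 3) :
    (curve a b).Equation (4 * (t + 7) / (t + 63)) (224 * (t + 7) / (t + 63) ^ 2) := by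
  rw [equation_iff, ha, hb]
  field_simp
  ring

variable [DecidableEq F]

lemma exists_point_add_self (ht : t + 63 ≠ 0)
    (ha : a = -8 * (t ^ 2 + 42 * t - 147) / (t + 63) ^ 2)
    (hb : b = 16 * (t + 7) ^ 3 / (t + 63) ^ 3) (h2 : (2 : F) ≠ 0) (hu : 224 * (t + 7) ≠ 0)
    (hP : (curve a b).Nonsingular (4 * (t + 7) / (t + 63)) (224 * (t + 7) / (t + 63) ^ 2)) :
    ∃ hQ : (curve a b).Nonsingular (4 * (t + 7) ^ 2 / (t + 63) ^ 2)
        (224 * (t + 7) ^ 2 / (t + 63) ^ 3),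
      Point.some _ _ hP + Point.some _ _ hP = Point.some _ _ hQ := by
  have hy : 224 * (t + 7) / (t + 63) ^ 2 ≠
      (curve a b).negY (4 * (t + 7) / (t + 63)) (224 * (t + 7) / (t + 63) ^ 2) := by
    rw [negY_curve]
    intro h
    exact mul_ne_zero h2 (div_ne_zero hu (pow_ne_zero 2 ht)) (by linear_combination h)
  refine Point.exists_add_self_eq_some hP hy (ℓ := 2 * (t + 35) / (t + 63)) ?_ ?_ ?_
  · rw [negY_curve, ha, hb]
    field_simp
    ring
  · simp only [addX, ha]
    field_simp
    ring
  · simp only [addY, negAddY, addX, negY, ha]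
    field_simp
    ring

lemma exists_double_add_point (ht : t + 63 ≠ 0)
    (ha : a = -8 * (t ^ 2 + 42 * t - 147) / (t + 63) ^ 2) (hu : 224 * (t + 7) ≠ 0)
    (hQ : (curve a b).Nonsingular (4 * (t + 7) ^ 2 / (t + 63) ^ 2)
      (224 * (t + 7) ^ 2 / (t + 63) ^ 3))
    (hP : (curve a b).Nonsingular (4 * (t + 7) / (t + 63)) (224 * (t + 7) / (t + 63) ^ 2)) :
    ∃ hT : (curve a b).Nonsingular 0 0,
      Point.some _ _ hQ + Point.some _ _ hP = Point.some _ _ hT := by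
  have hx : 4 * (t + 7) ^ 2 / (t + 63) ^ 2 ≠ 4 * (t + 7) / (t + 63) := by
    rw [Ne, div_eq_div_iff (pow_ne_zero 2 ht) ht]
    intro h
    exact mul_ne_zero hu ht (by linear_combination -h)
  refine Point.exists_add_eq_some_of_X_ne hQ hP hx (ℓ := 56 / (t + 63)) ?_ ?_ ?_
  · field_simp
    ring
  · simp only [addX, ha]
    field_simp
    ring
  · simp only [addY, negAddY, addX, negY, ha]
    field_simp
    ring

lemma three_nsmul_point (ht : t + 63 ≠ 0)
    (ha : a = -8 * (t ^ 2 + 42 * t - 147) / (t + 63) ^ 2)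
    (hb : b = 16 * (t + 7) ^ 3 / (t + 63) ^ 3) (h2 : (2 : F) ≠ 0) (hu : 224 * (t + 7) ≠ 0)
    (hP : (curve a b).Nonsingular (4 * (t + 7) / (t + 63)) (224 * (t + 7) / (t + 63) ^ 2))
    (hT : (curve a b).Nonsingular 0 0) :
    3 • Point.some _ _ hP = Point.some _ _ hT := by
  obtain ⟨hQ, hPP⟩ := exists_point_add_self ht ha hb h2 hu hP
  obtain ⟨_, hQP⟩ := exists_double_add_point ht ha hu hQ hP
  rw [succ_nsmul, two_nsmul, hPP, hQP]

end OrderSixFamily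

open OrderSixFamily

open Classical in
theorem point_of_order_six_general {K : Type*} [Field K]
    (h2 : (2 : K) ≠ 0) (h7 : (7 : K) ≠ 0)
    (s : K) (hs : s ^ 2 + 63 ≠ 0)
    (a b : K)
    (ha : a = -8 * (s ^ 4 + 42 * s ^ 2 - 147) / (s ^ 2 + 63) ^ 2)
    (hb : b = 16 * (s ^ 2 + 7) ^ 3 / (s ^ 2 + 63) ^ 3)
    (E : WeierstrassCurve.Affine K)
    (hE : E = { a₁ := 0, a₂ := a, a₃ := 0, a₄ := b, a₆ := 0 }) :
    E.Equation (4 * (s ^ 2 + 7) / (s ^ 2 + 63))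
      (224 * (s ^ 2 + 7) / (s ^ 2 + 63) ^ 2) ∧
    ((X * (X ^ 2 + C a * X + C b) : K[X]).Separable →
      ∃ (h : E.Nonsingular (4 * (s ^ 2 + 7) / (s ^ 2 + 63))
              (224 * (s ^ 2 + 7) / (s ^ 2 + 63) ^ 2))
        (h0 : E.Nonsingular 0 0),
        addOrderOf (WeierstrassCurve.Affine.Point.some _ _ h) ∣ 6 ∧
        (3 : ℕ) • (WeierstrassCurve.Affine.Point.some _ _ h) =
          WeierstrassCurve.Affine.Point.some _ _ h0) := by
  subst hE
  replace ha : a = -8 * ((s ^ 2) ^ 2 + 42 * s ^ 2 - 147) / (s ^ 2 + 63) ^ 2 := by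
    rw [ha]; ring
  have hPeq := equation_point hs ha hb
  refine ⟨hPeq, fun hsep => ?_⟩
  have hb0 : b ≠ 0 := ne_zero_of_separable_X_mul hsep
  have hu : 224 * (s ^ 2 + 7) ≠ 0 := by
    refine mul_ne_zero (by simpa [show (224 : K) = 2 ^ 5 * 7 by norm_num] using ⟨h2, h7⟩) ?_
    rintro hu
    simp [hb, hu] at hb0
  have hP := nonsingular_curve h2 hPeq (div_ne_zero hu (pow_ne_zero 2 hs))
  have hT := nonsingular_curve_zero (a := a) hb0
  have h3P := three_nsmul_point hs ha hb h2 hu hP hT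
  refine ⟨hP, hT, addOrderOf_dvd_of_nsmul_eq_zero ?_, h3P⟩
  simp only [show (6 : ℕ) = 3 + 3 from rfl, add_nsmul, h3P, some_zero_add_self]

open Classical in
/-- Let `K` be a field of characteristic not `2`, `3`, or `7`, let `s ∈ K` with
`s² + 63 ≠ 0`.  Set `a = −8(s⁴ + 42s² − 147)/(s² + 63)²` and
`b = 16(s² + 7)³/(s² + 63)³`.  Then the point
`P = (4(s² + 7)/(s² + 63), 224(s² + 7)/(s² + 63)²)` lies on the curve
`y² = x(x² + ax + b)`, and if this cubic is separable, `P` is a point of order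
dividing `6` on the corresponding elliptic curve with `3P = (0,0)`. -/
theorem point_of_order_six {K : Type*} [Field K]
    (h2 : (2 : K) ≠ 0) (h3 : (3 : K) ≠ 0) (h7 : (7 : K) ≠ 0)
    (s : K) (hs : s ^ 2 + 63 ≠ 0)
    (a b : K)
    (ha : a = -8 * (s ^ 4 + 42 * s ^ 2 - 147) / (s ^ 2 + 63) ^ 2)
    (hb : b = 16 * (s ^ 2 + 7) ^ 3 / (s ^ 2 + 63) ^ 3)
    (E : WeierstrassCurve.Affine K)
    (hE : E = { a₁ := 0, a₂ := a, a₃ := 0, a₄ := b, a₆ := 0 }) :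
    E.Equation (4 * (s ^ 2 + 7) / (s ^ 2 + 63))
      (224 * (s ^ 2 + 7) / (s ^ 2 + 63) ^ 2) ∧
    ((X * (X ^ 2 + C a * X + C b) : K[X]).Separable →
      ∃ (h : E.Nonsingular (4 * (s ^ 2 + 7) / (s ^ 2 + 63))
              (224 * (s ^ 2 + 7) / (s ^ 2 + 63) ^ 2))
        (h0 : E.Nonsingular 0 0),
        addOrderOf (WeierstrassCurve.Affine.Point.some _ _ h) ∣ 6 ∧
        (3 : ℕ) • (WeierstrassCurve.Affine.Point.some _ _ h) =
          WeierstrassCurve.Affine.Point.some _ _ h0) :=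
  point_of_order_six_general h2 h7 s hs a b ha hb E hE
end

section
/- Let K be a field of characteristic not 2, 3, or 7, s ∈ K with s² + 63 ≠ 0, and let r ∈ K̄ satisfy r² = −7. Then the roots of x² + ax + b, where a = −8(s⁴ + 42s² − 147)/(s² + 63)² and b = 16(s² + 7)³/(s² + 63)³, are α₂ = 4(s + r)³(s − 3r)/(s² + 63)² and α₃ = 4(s − r)³(s + 3r)/(s² + 63)². -/
/-!
Replacing `r` by `-r` swaps `α₂` and `α₃`, so their sum and product are even polynomials in `r`
and, after `r² = -7`, rational functions of `s` alone; they come out as `-a` and `b`.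
-/

open Polynomial

theorem Polynomial.X_sq_add_C_mul_X_add_C_eq_mul {R : Type*} [CommRing R] {a b u v : R}
    (ha : a = -(u + v)) (hb : b = u * v) :
    (X ^ 2 + C a * X + C b : R[X]) = (X - C u) * (X - C v) := by
  subst ha hb
  simp only [map_neg, map_add, map_mul]
  ring

section Conjugates

variable {R : Type*} [CommRing R] {t r : R}

theorem conj_numerators_add (hr : r ^ 2 = -7) :
    4 * (t + r) ^ 3 * (t - 3 * r) + 4 * (t - r) ^ 3 * (t + 3 * r) =
      8 * (t ^ 4 + 42 * t ^ 2 - 147) := by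
  linear_combination (-24 * r ^ 2 - 48 * t ^ 2 + 168) * hr

theorem conj_numerators_mul (hr : r ^ 2 = -7) :
    (4 * (t + r) ^ 3 * (t - 3 * r)) * (4 * (t - r) ^ 3 * (t + 3 * r)) =
      16 * (t ^ 2 + 7) ^ 3 * (t ^ 2 + 63) := by
  calc (4 * (t + r) ^ 3 * (t - 3 * r)) * (4 * (t - r) ^ 3 * (t + 3 * r))
      _ = 16 * (t ^ 2 - r ^ 2) ^ 3 * (t ^ 2 - 9 * r ^ 2) := by ring
      _ = 16 * (t ^ 2 + 7) ^ 3 * (t ^ 2 + 63) := by rw [hr]; ring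

end Conjugates

theorem roots_of_quadratic_factor_general {K L : Type*} [Field K] [Field L] [Algebra K L]
    (s : K) (hs : s ^ 2 + 63 ≠ 0)
    (r : L) (hr : r ^ 2 = -7)
    (a b : K)
    (ha : a = -8 * (s ^ 4 + 42 * s ^ 2 - 147) / (s ^ 2 + 63) ^ 2)
    (hb : b = 16 * (s ^ 2 + 7) ^ 3 / (s ^ 2 + 63) ^ 3)
    (α₂ α₃ : L)
    (hα₂ : α₂ = 4 * (algebraMap K L s + r) ^ 3 * (algebraMap K L s - 3 * r) /
      (algebraMap K L s ^ 2 + 63) ^ 2)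
    (hα₃ : α₃ = 4 * (algebraMap K L s - r) ^ 3 * (algebraMap K L s + 3 * r) /
      (algebraMap K L s ^ 2 + 63) ^ 2) :
    (X ^ 2 + C (algebraMap K L a) * X + C (algebraMap K L b) : L[X]) =
      (X - C α₂) * (X - C α₃) := by
  set t := algebraMap K L s
  have ht : t ^ 2 + 63 ≠ 0 := by
    simpa [t, map_ofNat] using (map_ne_zero (algebraMap K L)).mpr hs
  have ha' : algebraMap K L a = -8 * (t ^ 4 + 42 * t ^ 2 - 147) / (t ^ 2 + 63) ^ 2 := by
    simp [ha, t, map_ofNat]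
  have hb' : algebraMap K L b = 16 * (t ^ 2 + 7) ^ 3 / (t ^ 2 + 63) ^ 3 := by
    simp [hb, t, map_ofNat]
  refine X_sq_add_C_mul_X_add_C_eq_mul ?_ ?_
  · rw [ha', hα₂, hα₃, ← add_div, conj_numerators_add hr]
    ring
  · rw [hb', hα₂, hα₃, div_mul_div_comm, conj_numerators_mul hr]
    field_simp

/-- Let `K` be a field of characteristic not `2`, `3`, or `7`, `s ∈ K` with `s² + 63 ≠ 0`,
and let `r` in a (separably closed) extension `L` of `K` satisfy `r² = −7`.  The roots of
`x² + ax + b`, where `a = −8(s⁴ + 42s² − 147)/(s² + 63)²` and `b = 16(s² + 7)³/(s² + 63)³`,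
are `α₂ = 4(s + r)³(s − 3r)/(s² + 63)²` and `α₃ = 4(s − r)³(s + 3r)/(s² + 63)²`; that is,
`x² + ax + b = (x − α₂)(x − α₃)` in `L[x]`. -/
theorem roots_of_quadratic_factor {K L : Type*} [Field K] [Field L] [Algebra K L]
    (h2 : (2 : K) ≠ 0) (h3 : (3 : K) ≠ 0) (h7 : (7 : K) ≠ 0)
    (s : K) (hs : s ^ 2 + 63 ≠ 0)
    (r : L) (hr : r ^ 2 = -7)
    (a b : K)
    (ha : a = -8 * (s ^ 4 + 42 * s ^ 2 - 147) / (s ^ 2 + 63) ^ 2)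
    (hb : b = 16 * (s ^ 2 + 7) ^ 3 / (s ^ 2 + 63) ^ 3)
    (α₂ α₃ : L)
    (hα₂ : α₂ = 4 * (algebraMap K L s + r) ^ 3 * (algebraMap K L s - 3 * r) /
      (algebraMap K L s ^ 2 + 63) ^ 2)
    (hα₃ : α₃ = 4 * (algebraMap K L s - r) ^ 3 * (algebraMap K L s + 3 * r) /
      (algebraMap K L s ^ 2 + 63) ^ 2) :
    (X ^ 2 + C (algebraMap K L a) * X + C (algebraMap K L b) : L[X]) =
      (X - C α₂) * (X - C α₃) :=
  roots_of_quadratic_factor_general s hs r hr a b ha hb α₂ α₃ hα₂ hα₃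
end

section
/- Let L be a commutative ring containing an element ρ with ρ² = −7, and let s be an element such that s² + 63 and s + ρ and 8s² + 7(1 − 3ρ)s + 1568 are units. Define A = 4(s + ρ)³(s − 3ρ)/(s² + 63)², B = (31 − 3ρ)/2 (assuming 2 invertible), ℓ = (1 − ρ)(s + ρ)²/(s² + 63), and m = 3(5 − ρ)(s − 3ρ)/(2(s + ρ)). Then A·(B − 32) = ℓ²·m. -/
/-! Both sides are the common factor `(s + ρ)³ (s - 3ρ) / (s² + 63)²` times a constant of
`ℤ[ρ, 1/2]`; the two constants agree because `ρ² = -7`. -/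

theorem three_mul_one_sub_sq_mul_five_sub {R : Type*} [CommRing R] {ρ : R} (hρ : ρ ^ 2 = -7) :
    3 * (1 - ρ) ^ 2 * (5 - ρ) = 4 * (31 - 3 * ρ - 64) := by
  linear_combination (21 - 3 * ρ) * hρ

theorem A_times_B_sub_32_eq_ell_sq_m_general {L : Type*} [CommRing L]
    (ρ s : L) (hρ : ρ ^ 2 = -7)
    [Invertible (2 : L)] [Invertible (s ^ 2 + 63)] [Invertible (s + ρ)]
    (A B ℓ m : L)
    (hA : A = 4 * (s + ρ) ^ 3 * (s - 3 * ρ) * (⅟(s ^ 2 + 63)) ^ 2)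
    (hB : B = (31 - 3 * ρ) * ⅟(2 : L))
    (hℓ : ℓ = (1 - ρ) * (s + ρ) ^ 2 * ⅟(s ^ 2 + 63))
    (hm : m = 3 * (5 - ρ) * (s - 3 * ρ) * ⅟(2 : L) * ⅟(s + ρ)) :
    A * (B - 32) = ℓ ^ 2 * m := by
  set P := (s + ρ) ^ 3 * (s - 3 * ρ) * (⅟(s ^ 2 + 63)) ^ 2
  have hA' : A = 4 * P := by rw [hA]; ring
  have hB' : B - 32 = (31 - 3 * ρ - 64) * ⅟(2 : L) := by
    rw [hB]; linear_combination 32 * (mul_invOf_self (2 : L))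
  have hℓm : ℓ ^ 2 * m = 3 * (1 - ρ) ^ 2 * (5 - ρ) * ⅟(2 : L) * P := by
    rw [hℓ, hm]
    linear_combination 3 * (1 - ρ) ^ 2 * (5 - ρ) * ⅟(2 : L) * P * (mul_invOf_self (s + ρ))
  rw [hA', hB', hℓm, three_mul_one_sub_sq_mul_five_sub hρ]
  ring

/-- Let `L` be a commutative ring in which `2` is invertible, containing an element `ρ`
with `ρ² = −7`, and let `s ∈ L` be such that `s² + 63`, `s + ρ`, and
`8s² + 7(1 − 3ρ)s + 1568` are units.  Define
`A = 4(s + ρ)³(s − 3ρ)/(s² + 63)²`, `B = (31 − 3ρ)/2`,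
`ℓ = (1 − ρ)(s + ρ)²/(s² + 63)`, and `m = 3(5 − ρ)(s − 3ρ)/(2(s + ρ))`.
Then `A·(B − 32) = ℓ²·m`. -/
theorem A_times_B_sub_32_eq_ell_sq_m {L : Type*} [CommRing L]
    (ρ s : L) (hρ : ρ ^ 2 = -7)
    [Invertible (2 : L)] [Invertible (s ^ 2 + 63)] [Invertible (s + ρ)]
    [Invertible (8 * s ^ 2 + 7 * (1 - 3 * ρ) * s + 1568)]
    (A B ℓ m : L)
    (hA : A = 4 * (s + ρ) ^ 3 * (s - 3 * ρ) * (⅟(s ^ 2 + 63)) ^ 2)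
    (hB : B = (31 - 3 * ρ) * ⅟(2 : L))
    (hℓ : ℓ = (1 - ρ) * (s + ρ) ^ 2 * ⅟(s ^ 2 + 63))
    (hm : m = 3 * (5 - ρ) * (s - 3 * ρ) * ⅟(2 : L) * ⅟(s + ρ)) :
    A * (B - 32) = ℓ ^ 2 * m :=
  A_times_B_sub_32_eq_ell_sq_m_general ρ s hρ A B ℓ m hA hB hℓ hm
end

section
/- Let L be a commutative ring in which 2 and 3 are invertible, containing ρ with ρ² = −7. Let z, w ∈ L satisfy w² = z³ + 14z² + 196z, suppose z⁴ − 896z³ − 24696z² − 175616z + 38416 and 8z² + 7(1 − 3ρ)z + 1568 and the relevant denominators are units, and set s = −21·((z² + 196)(z² + 56z + 196) + 32(z + 14)(z − 14)w)/(z⁴ − 896z³ − 24696z² − 175616z + 38416). Then m = 3(5 − ρ)(s − 3ρ)/(2(s + ρ)) satisfies m = n² where n = 6·((7 + 11ρ)w − 4z² + 784)/(8z² + 7(1 − 3ρ)z + 1568). -/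
/-!
Write `s = N/Q` and `n = 6A/D`. Clearing denominators, `m = n²` becomes
`3(5 - ρ)(N - 3ρQ)D² = 72A²(N + ρQ)` modulo `ρ² + 7` and the cubic. Taking norms along `w ↦ -w`,
`Nm(N + ρQ) = 7(31 - 3ρ)/32 · D²Q`, `Nm(N - 3ρQ) = 126(3 + ρ) · E²Q` and `Nm(A) = 2DE` with
`E = z² + 7(7 - ρ)z + 196`, which is why `(N - 3ρQ)/(N + ρQ)` and `A²/D²` can agree up to a
constant on the curve.
-/

theorem cleared_denominators_identity {L : Type*} [CommRing L] {ρ z w : L} (hρ : ρ ^ 2 = -7)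
    (hw : w ^ 2 = z ^ 3 + 14 * z ^ 2 + 196 * z) :
    3 * (5 - ρ)
        * (-21 * ((z ^ 2 + 196) * (z ^ 2 + 56 * z + 196) + 32 * (z + 14) * (z - 14) * w)
          - 3 * ρ * (z ^ 4 - 896 * z ^ 3 - 24696 * z ^ 2 - 175616 * z + 38416))
        * (8 * z ^ 2 + 7 * (1 - 3 * ρ) * z + 1568) ^ 2
      = 72 * ((7 + 11 * ρ) * w - 4 * z ^ 2 + 784) ^ 2
        * (-21 * ((z ^ 2 + 196) * (z ^ 2 + 56 * z + 196) + 32 * (z + 14) * (z - 14) * w)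
          + ρ * (z ^ 4 - 896 * z ^ 3 - 24696 * z ^ 2 - 175616 * z + 38416)) := by
  grind

theorem m_is_a_square_general {L : Type*} [CommRing L]
    (ρ z w : L) (hρ : ρ ^ 2 = -7)
    (hw : w ^ 2 = z ^ 3 + 14 * z ^ 2 + 196 * z)
    [Invertible (2 : L)]
    [Invertible (z ^ 4 - 896 * z ^ 3 - 24696 * z ^ 2 - 175616 * z + 38416)]
    [Invertible (8 * z ^ 2 + 7 * (1 - 3 * ρ) * z + 1568)]
    (s : L)
    (hs : s = -21 * ((z ^ 2 + 196) * (z ^ 2 + 56 * z + 196)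
        + 32 * (z + 14) * (z - 14) * w)
      * ⅟(z ^ 4 - 896 * z ^ 3 - 24696 * z ^ 2 - 175616 * z + 38416))
    [Invertible (s + ρ)]
    (m n : L)
    (hm : m = 3 * (5 - ρ) * (s - 3 * ρ) * ⅟(2 : L) * ⅟(s + ρ))
    (hn : n = 6 * ((7 + 11 * ρ) * w - 4 * z ^ 2 + 784)
      * ⅟(8 * z ^ 2 + 7 * (1 - 3 * ρ) * z + 1568)) :
    m = n ^ 2 := by
  set Q := z ^ 4 - 896 * z ^ 3 - 24696 * z ^ 2 - 175616 * z + 38416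
  set D := 8 * z ^ 2 + 7 * (1 - 3 * ρ) * z + 1568
  have hsQ : s * Q = -21 * ((z ^ 2 + 196) * (z ^ 2 + 56 * z + 196)
      + 32 * (z + 14) * (z - 14) * w) := by
    rw [hs, invOf_mul_cancel_right]
  have hmden : m * (s + ρ) * 2 = 3 * (5 - ρ) * (s - 3 * ρ) := by
    rw [hm, invOf_mul_cancel_right, invOf_mul_cancel_right]
  have hnD : n * D = 6 * ((7 + 11 * ρ) * w - 4 * z ^ 2 + 784) := by
    rw [hn, invOf_mul_cancel_right]
  have hcross : 3 * (5 - ρ) * (s - 3 * ρ) * D ^ 2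
      = 72 * ((7 + 11 * ρ) * w - 4 * z ^ 2 + 784) ^ 2 * (s + ρ) := by
    refine (mul_left_inj_of_invertible Q).mp ?_
    linear_combination cleared_denominators_identity hρ hw
      + (3 * (5 - ρ) * D ^ 2 - 72 * ((7 + 11 * ρ) * w - 4 * z ^ 2 + 784) ^ 2) * hsQ
  have hunit : IsUnit ((s + ρ) * 2 * D ^ 2) :=
    ((isUnit_of_invertible _).mul (isUnit_of_invertible _)).mul ((isUnit_of_invertible D).pow 2)
  refine hunit.mul_left_inj.mp ?_
  linear_combination D ^ 2 * hmden + hcross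
    - 2 * (s + ρ) * (n * D + 6 * ((7 + 11 * ρ) * w - 4 * z ^ 2 + 784)) * hnD

/-- Let `L` be a commutative ring in which `2` and `3` are invertible, containing `ρ` with
`ρ² = −7`.  Let `z, w ∈ L` satisfy `w² = z³ + 14z² + 196z`, suppose the quartic
`z⁴ − 896z³ − 24696z² − 175616z + 38416`, the quantity `8z² + 7(1 − 3ρ)z + 1568`, and the
relevant denominator `s + ρ` are units, and set
`s = −21((z² + 196)(z² + 56z + 196) + 32(z + 14)(z − 14)w)/(z⁴ − 896z³ − 24696z² − 175616z + 38416)`.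
Then `m = 3(5 − ρ)(s − 3ρ)/(2(s + ρ))` satisfies `m = n²` where
`n = 6((7 + 11ρ)w − 4z² + 784)/(8z² + 7(1 − 3ρ)z + 1568)`. -/
theorem m_is_a_square {L : Type*} [CommRing L]
    (ρ z w : L) (hρ : ρ ^ 2 = -7)
    (hw : w ^ 2 = z ^ 3 + 14 * z ^ 2 + 196 * z)
    [Invertible (2 : L)] [Invertible (3 : L)]
    [Invertible (z ^ 4 - 896 * z ^ 3 - 24696 * z ^ 2 - 175616 * z + 38416)]
    [Invertible (8 * z ^ 2 + 7 * (1 - 3 * ρ) * z + 1568)]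
    (s : L)
    (hs : s = -21 * ((z ^ 2 + 196) * (z ^ 2 + 56 * z + 196)
        + 32 * (z + 14) * (z - 14) * w)
      * ⅟(z ^ 4 - 896 * z ^ 3 - 24696 * z ^ 2 - 175616 * z + 38416))
    [Invertible (s + ρ)]
    (m n : L)
    (hm : m = 3 * (5 - ρ) * (s - 3 * ρ) * ⅟(2 : L) * ⅟(s + ρ))
    (hn : n = 6 * ((7 + 11 * ρ) * w - 4 * z ^ 2 + 784)
      * ⅟(8 * z ^ 2 + 7 * (1 - 3 * ρ) * z + 1568)) :
    m = n ^ 2 :=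
  m_is_a_square_general ρ z w hρ hw s hs m n hm hn
end

section
/- The rational function on the curve w² = z³ + 14z² + 196z given by s(z, w) = −21·((z² + 196)(z² + 56z + 196) + 32(z + 14)(z − 14)w)/(z⁴ − 896z³ − 24696z² − 175616z + 38416) is invariant under translation by the 2-torsion point (0, 0): if (z', w') is the sum of (z, w) and (0, 0) in the group law of the elliptic curve D : y² = x³ + 14x² + 196x, then s(z', w') = s(z, w) whenever both sides are defined. -/
/-! Translation by `(0, 0)` multiplies both the numerator and the denominator of `s` by the
same nonzero factor `(196 / z²)²`. -/

/-- The rational function `s(z,w)` from Theorem 3.2, as a function of a point `(z, w)`. -/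
noncomputable def sFun (z w : ℚ) : ℚ :=
  -21 * (((z ^ 2 + 196) * (z ^ 2 + 56 * z + 196) + 32 * (z + 14) * (z - 14) * w) /
    (z ^ 4 - 896 * z ^ 3 - 24696 * z ^ 2 - 175616 * z + 38416))

def sNum (z w : ℚ) : ℚ :=
  (z ^ 2 + 196) * (z ^ 2 + 56 * z + 196) + 32 * (z + 14) * (z - 14) * w

def sDen (z : ℚ) : ℚ :=
  z ^ 4 - 896 * z ^ 3 - 24696 * z ^ 2 - 175616 * z + 38416

theorem sFun_eq_neg_mul_sNum_div_sDen (z w : ℚ) : sFun z w = -21 * (sNum z w / sDen z) := rfl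

theorem sNum_translate {z : ℚ} (hz : z ≠ 0) (w : ℚ) :
    sNum (196 / z) (-196 * w / z ^ 2) = (196 / z ^ 2) ^ 2 * sNum z w := by
  unfold sNum
  field_simp
  ring

theorem sDen_translate {z : ℚ} (hz : z ≠ 0) :
    sDen (196 / z) = (196 / z ^ 2) ^ 2 * sDen z := by
  unfold sDen
  field_simp
  ring

theorem sFun_invariant_under_translation_general (z w : ℚ)
    (hz : z ≠ 0) :
    sFun (196 / z) (-196 * w / z ^ 2) = sFun z w := by
  rw [sFun_eq_neg_mul_sNum_div_sDen, sFun_eq_neg_mul_sNum_div_sDen, sNum_translate hz,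
    sDen_translate hz, mul_div_mul_left _ _ (by positivity)]

/-- The rational function `s(z, w)` on the curve `w² = z³ + 14z² + 196z` is invariant
under translation by the 2-torsion point `(0, 0)`: translation by `(0,0)` sends a point
`(z, w)` with `z ≠ 0` to `(196/z, −196w/z²)`, and `s(196/z, −196w/z²) = s(z, w)` whenever
both sides are defined (i.e. the denominators are nonzero). -/
theorem sFun_invariant_under_translation (z w : ℚ)
    (hzw : w ^ 2 = z ^ 3 + 14 * z ^ 2 + 196 * z) (hz : z ≠ 0)
    (hden : z ^ 4 - 896 * z ^ 3 - 24696 * z ^ 2 - 175616 * z + 38416 ≠ 0)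
    (hden' : (196 / z) ^ 4 - 896 * (196 / z) ^ 3 - 24696 * (196 / z) ^ 2
      - 175616 * (196 / z) + 38416 ≠ 0) :
    sFun (196 / z) (-196 * w / z ^ 2) = sFun z w :=
  sFun_invariant_under_translation_general z w hz
end
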